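/- arXiv:1606.05962 — 3 statements merged into one kernel-verified Lean document; each statement's English description precedes it below -/
import Mathlib

section
/- Let m ≥ 2 and s ≤ m − 1, and let v : Fin m → (Fin s → ℝ) be a family of m real vectors of length s. Then there exists an index k : Fin m such that for every coordinate l : Fin s, v k l ≤ max over i ≠ k of v i l (i.e., v k is dominated, coordinate-wise, by the pointwise maximum of the other m − 1 vectors). -/
/-- Pigeonhole core of the lower-bound proofs: if `s ≤ m - 1`, then among any `m`
real vectors of length `s` some vector `v k` is dominated, coordinate-wise, by the
pointwise maximum of the other `m - 1` vectors. -/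
theorem dominated_vector_exists (m s : ℕ) (hm : 2 ≤ m) (hs : s ≤ m - 1)
    (v : Fin m → (Fin s → ℝ)) :
    ∃ k : Fin m, ∀ l : Fin s,
      v k l ≤ (Finset.univ.erase k).sup'
        (by
          rw [Finset.erase_nonempty (Finset.mem_univ k),
            ← Finset.one_lt_card_iff_nontrivial, Finset.card_univ, Fintype.card_fin]
          omega)
        (fun i => v i l) := by
  have hm0 : 0 < m := by omega
  -- pick a maximizer for each coordinate
  have hmax : ∀ l : Fin s, ∃ i : Fin m, ∀ j : Fin m, v j l ≤ v i l := by
    intro l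
    obtain ⟨i, _, hi⟩ := Finset.exists_max_image Finset.univ (fun j => v j l)
      ⟨⟨0, hm0⟩, Finset.mem_univ _⟩
    exact ⟨i, fun j => hi j (Finset.mem_univ j)⟩
  choose f hf using hmax
  -- f is not surjective since s < m
  have hns : ¬ Function.Surjective f := by
    intro hsurj
    have := Fintype.card_le_of_surjective f hsurj
    simp [Fintype.card_fin] at this
    omega
  rw [Function.Surjective] at hns
  push_neg at hns
  obtain ⟨k, hk⟩ := hns
  refine ⟨k, fun l => ?_⟩
  have hmem : f l ∈ Finset.univ.erase k :=
    Finset.mem_erase.mpr ⟨fun h => hk l h, Finset.mem_univ _⟩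
  exact le_trans (hf l k) (Finset.le_sup' (fun i => v i l) hmem)
end

section
/- (Lemma 1 of the paper — online lower bound of n − 1 for real-valued vector timestamps on the star graph.) Let n ≥ 3 and s ≤ n − 2. For a permutation σ of Fin (n − 1), define the happened-before relation HB_σ on the type Fin (n − 1) ⊕ Fin (n − 1) (left summands are the send events, one at each of the n − 1 radial processes; right summands are the receive events at the central process, in the order they occur) by: HB_σ (inl i) (inr j) holds iff σ i ≤ j; HB_σ (inr j) (inr j') holds iff j < j'; and HB_σ holds for no other pair (in particular the send events are pairwise unrelated). Then there is NO function t : Fin (n − 1) → (Fin s → ℝ) such that for every permutation σ of Fin (n − 1) there exists u : Fin (n − 1) → (Fin s → ℝ) with the combined labeling T := Sum.elim t u satisfying: (a) T is injective, and (b) for all events x, y : Fin (n − 1) ⊕ Fin (n − 1), HB_σ x y holds if and only if T x < T y, where < is the strict pointwise order on Fin s → ℝ. -/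
/-- Happened-before relation for the star-graph execution of Lemma 1: each of the
`m` radial processes performs one send event (`Sum.inl i`), and the central process
performs `m` receive events (`Sum.inr j`) in the order given by the permutation `σ`
(the message of radial process `i` is received at the `σ i`-th receive event). -/
def starHB {m : ℕ} (σ : Equiv.Perm (Fin m)) :
    (Fin m ⊕ Fin m) → (Fin m ⊕ Fin m) → Prop
  | Sum.inl i, Sum.inr j => σ i ≤ j
  | Sum.inr j, Sum.inr j' => j < j'
  | _, _ => False

/-- Lemma 1 of the paper: for the star graph with `n ≥ 3` processes, no online
algorithm can assign real-valued vector timestamps of length `s ≤ n - 2` capturing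
happened-before exactly.  The send-event timestamps `t` must be fixed before the
adversary chooses the delivery order `σ`; the receive-event timestamps `u` may
depend on `σ`. -/
theorem star_online_lower_bound_real (n s : ℕ) (hn : 3 ≤ n) (hs : s ≤ n - 2) :
    ¬ ∃ t : Fin (n - 1) → (Fin s → ℝ),
        ∀ σ : Equiv.Perm (Fin (n - 1)),
          ∃ u : Fin (n - 1) → (Fin s → ℝ),
            Function.Injective (Sum.elim t u) ∧
            ∀ x y : Fin (n - 1) ⊕ Fin (n - 1),
              starHB σ x y ↔ Sum.elim t u x < Sum.elim t u y := by
  rintro ⟨t, ht⟩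
  have hm2 : 2 ≤ n - 1 := by omega
  have hsm : s < n - 1 := by omega
  have : Nonempty (Fin (n - 1)) := ⟨⟨0, by omega⟩⟩
  -- for each coordinate, choose an argmax send
  have hmax : ∀ l : Fin s, ∃ i : Fin (n - 1), ∀ i', t i' l ≤ t i l :=
    fun l => Finite.exists_max (fun i => t i l)
  choose f hf using hmax
  -- some index is never an argmax
  have hexists : ∃ i : Fin (n - 1), ∀ l, f l ≠ i := by
    by_contra h
    push_neg at h
    have hsurj : Function.Surjective f := fun i => h i
    have := Fintype.card_le_of_surjective f hsurj
    simp only [Fintype.card_fin] at this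
    omega
  obtain ⟨i0, hi0⟩ := hexists
  have hlast : n - 1 - 1 < n - 1 := by omega
  have hjj : n - 1 - 2 < n - 1 := by omega
  set last : Fin (n - 1) := ⟨n - 1 - 1, hlast⟩ with hlastdef
  set jj : Fin (n - 1) := ⟨n - 1 - 2, hjj⟩ with hjjdef
  obtain ⟨u, hinj, hspec⟩ := ht (Equiv.swap i0 last)
  have hσi0 : Equiv.swap i0 last i0 = last := Equiv.swap_apply_left i0 last
  -- every send other than i0 happens before receive jj, so is dominated by u jj
  have hle : ∀ i : Fin (n - 1), i ≠ i0 → ∀ l, t i l ≤ u jj l := by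
    intro i hi
    have h1 : Equiv.swap i0 last i ≠ last := fun h =>
      hi ((Equiv.swap i0 last).injective (h.trans hσi0.symm))
    have h1' : (Equiv.swap i0 last i).val ≠ n - 1 - 1 := fun h => h1 (Fin.ext h)
    have h2 : Equiv.swap i0 last i ≤ jj := by
      have := (Equiv.swap i0 last i).isLt
      rw [Fin.le_def]
      simp only [hjjdef]
      omega
    have h3 : starHB (Equiv.swap i0 last) (Sum.inl i) (Sum.inr jj) := h2
    have h4 := (hspec (Sum.inl i) (Sum.inr jj)).mp h3
    simp only [Sum.elim_inl, Sum.elim_inr] at h4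
    intro l
    exact le_of_lt h4 l
  -- but send i0 is not dominated by u jj
  have hnlt : ¬ t i0 < u jj := by
    intro h
    have h2 : starHB (Equiv.swap i0 last) (Sum.inl i0) (Sum.inr jj) :=
      (hspec (Sum.inl i0) (Sum.inr jj)).mpr (by simpa using h)
    have h3 : Equiv.swap i0 last i0 ≤ jj := h2
    rw [hσi0, Fin.le_def] at h3
    simp only [hlastdef, hjjdef] at h3
    omega
  have hne : t i0 ≠ u jj := by
    intro h
    have h2 : (Sum.inl i0 : Fin (n - 1) ⊕ Fin (n - 1)) = Sum.inr jj :=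
      hinj (a₁ := Sum.inl i0) (a₂ := Sum.inr jj) (by simpa using h)
    simp at h2
  have hnle : ¬ t i0 ≤ u jj := fun h => hnlt (lt_of_le_of_ne h hne)
  rw [Pi.le_def] at hnle
  push_neg at hnle
  obtain ⟨l, hl⟩ := hnle
  have ha : t i0 l ≤ t (f l) l := hf l i0
  have hb : t (f l) l ≤ u jj l := hle (f l) (hi0 l) l
  exact absurd (ha.trans hb) (not_le.mpr hl)
end

section
/- (Combinatorial core of Lemmas 3 and 4 of the paper — online lower bounds for graphs of vertex connectivity ≥ 2 and of connectivity 1.) Let m ≥ 2 and s ≤ m − 1. There is NO function t : Fin m → (Fin s → ℝ) such that for every index k : Fin m there exists a vector u : Fin s → ℝ satisfying simultaneously: (a) t i < u for every i ≠ k (strict pointwise order), (b) t k ≠ u, and (c) ¬(t k < u). -/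
/-- Combinatorial core of Lemmas 3 and 4: with `s ≤ m - 1` coordinates, one cannot
label `m` mutually concurrent events with real vectors `t i` so that for every
choice of a "slow" index `k` there is a vector `u` strictly above all `t i` with
`i ≠ k`, yet distinct from and not strictly above `t k`. -/
theorem no_short_vectors_flooding (m s : ℕ) (hm : 2 ≤ m) (hs : s ≤ m - 1) :
    ¬ ∃ t : Fin m → (Fin s → ℝ),
        ∀ k : Fin m, ∃ u : Fin s → ℝ,
          (∀ i : Fin m, i ≠ k → t i < u) ∧ t k ≠ u ∧ ¬ (t k < u) := by
  rintro ⟨t, h⟩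
  -- For each k, find a coordinate where t k strictly exceeds all other t i.
  have key : ∀ k : Fin m, ∃ l : Fin s, ∀ i : Fin m, i ≠ k → t i l < t k l := by
    intro k
    obtain ⟨u, hu, hne, hnlt⟩ := h k
    have hnle : ¬ t k ≤ u := fun hle => hnlt (lt_of_le_of_ne hle hne)
    obtain ⟨l, hl⟩ := not_forall.mp hnle
    refine ⟨l, fun i hi => ?_⟩
    have h1 : t i l ≤ u l := (hu i hi).le l
    have h2 : u l < t k l := lt_of_not_ge hl
    exact h1.trans_lt h2
  choose f hf using key
  have hinj : Function.Injective f := by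
    intro a b hab
    by_contra hne
    have h1 := hf a b (Ne.symm hne)
    have h2 := hf b a hne
    rw [← hab] at h2
    exact absurd (h1.trans h2) (lt_irrefl _)
  have := Fintype.card_le_of_injective f hinj
  simp only [Fintype.card_fin] at this
  omega
end
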